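/- For the Young lattice with Schur multiplicity κ(λ,Λ) = (1/q^{λ'_i}) ∏_{s∈λ}[h_Λ(s)]_q/∏_{s∈λ}[h_λ(s)]_q, the product of multiplicities along any saturated chain from λ to ν depends only on the endpoints λ and ν, and for any Λ ⊆ ν one has dim(Λ, ν)/dim(∅, ν) = (q^{n(Λ)} / ∏_{s∈Λ}[h_Λ(s)]_q) · dim*(ν/Λ)/dim*(ν), where dim(μ,ν) is the sum over chains from μ to ν of the product of κ's, dim* denotes the number of chains in the ordinary Young lattice (so dim*(ν) = f^ν and dim*(ν/Λ) = f^{ν/Λ}, the number of standard Young tableaux of skew shape ν/Λ). -/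

import Mathlib

/-- Arm length: the number of cells of `μ` strictly east of the cell `s`. -/
def arm (μ : YoungDiagram) (s : ℕ × ℕ) : ℕ := μ.rowLen s.1 - (s.2 + 1)

/-- Leg length: the number of cells of `μ` strictly south of the cell `s`. -/
def leg (μ : YoungDiagram) (s : ℕ × ℕ) : ℕ := μ.colLen s.2 - (s.1 + 1)

/-- Hook length of the cell `s` in `μ`: `h = a + l + 1`. -/
def hook (μ : YoungDiagram) (s : ℕ × ℕ) : ℕ := arm μ s + leg μ s + 1

/-- The q-integer `[m]_q = (q^m − 1)/(q − 1)`. -/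
noncomputable def qint (q : ℝ) (m : ℕ) : ℝ := (q ^ m - 1) / (q - 1)

/-- `IsChain κ m μ ν γ` says that `γ` encodes a saturated chain of length `m`
from `μ` to `ν` in the Young lattice (constant from time `m` on). -/
def IsChainFrom (m : ℕ) (μ ν : YoungDiagram) (γ : ℕ → YoungDiagram) : Prop :=
  γ 0 = μ ∧ (∀ j, m ≤ j → γ j = ν) ∧
    ∀ j < m, ∃ x, x ∉ (γ j).cells ∧ (γ (j + 1)).cells = insert x (γ j).cells

/-!
Put `W(μ) = q^{-n(μ)} ∏_{s∈μ} [h_μ(s)]_q`. When `ν` is obtained from `μ` by adding the cell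
`(r, c)`, we have `μ'_c = r`, `n(ν) = n(μ) + r` and the new cell has hook `1`, so
`κ(μ, ν) = W(ν) / W(μ)`. The product of `κ` along a chain therefore telescopes to
`W(ν) / W(μ)`, every chain from `Λ` to `ν` contributes the same amount, and
`dim(Λ, ν) / dim(∅, ν) = f^{ν/Λ} / (W(Λ) f^ν)` since `W(∅) = 1`.
-/

open Finset

lemma qint_ne_zero {q : ℝ} (hq0 : 0 < q) (hq1 : q ≠ 1) {m : ℕ} (hm : m ≠ 0) :
    qint q m ≠ 0 :=
  div_ne_zero (sub_ne_zero.2 ((pow_eq_one_iff_of_nonneg hq0.le hm).not.2 hq1))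
    (sub_ne_zero.2 hq1)

lemma qint_one {q : ℝ} (hq1 : q ≠ 1) : qint q 1 = 1 := by
  simp [qint, sub_ne_zero.2 hq1]

noncomputable def qHookProd (q : ℝ) (μ : YoungDiagram) : ℝ := ∏ s ∈ μ.cells, qint q (hook μ s)

lemma qHookProd_ne_zero {q : ℝ} (hq0 : 0 < q) (hq1 : q ≠ 1) (μ : YoungDiagram) :
    qHookProd q μ ≠ 0 :=
  prod_ne_zero_iff.2 fun _ _ => qint_ne_zero hq0 hq1 (Nat.succ_ne_zero _)

/-- Macdonald's `n(μ) = Σ_i (i - 1) μ_i`, with rows indexed from `0`. -/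
def rowIndexSum (μ : YoungDiagram) : ℕ := ∑ s ∈ μ.cells, s.1

lemma rowIndexSum_eq_sum_rowLen (μ : YoungDiagram) :
    rowIndexSum μ = ∑ i ∈ range (μ.colLen 0), i * μ.rowLen i := by
  have hrow : ∀ s ∈ μ.cells, s.1 ∈ range (μ.colLen 0) := fun s hs => by
    rw [mem_range, ← YoungDiagram.mem_iff_lt_colLen]
    exact μ.up_left_mem le_rfl (Nat.zero_le _) ((YoungDiagram.mem_cells s).1 hs)
  rw [rowIndexSum, ← sum_fiberwise_of_maps_to hrow]
  refine sum_congr rfl fun i _ => ?_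
  rw [sum_congr rfl fun s hs => (mem_filter.1 hs).2, sum_const, smul_eq_mul, mul_comm,
    μ.rowLen_eq_card]
  rfl

noncomputable def schurWeight (q : ℝ) (μ : YoungDiagram) : ℝ :=
  qHookProd q μ / q ^ rowIndexSum μ

lemma schurWeight_ne_zero {q : ℝ} (hq0 : 0 < q) (hq1 : q ≠ 1) (μ : YoungDiagram) :
    schurWeight q μ ≠ 0 :=
  div_ne_zero (qHookProd_ne_zero hq0 hq1 μ) (pow_ne_zero _ hq0.ne')

lemma schurWeight_bot (q : ℝ) : schurWeight q ⊥ = 1 := by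
  simp [schurWeight, qHookProd, rowIndexSum]

section AddCell

variable {μ ν : YoungDiagram} {r c : ℕ}

lemma mem_iff_of_cells_eq_insert {x : ℕ × ℕ} (hν : ν.cells = insert x μ.cells) {s : ℕ × ℕ} :
    s ∈ ν ↔ s = x ∨ s ∈ μ := by
  rw [← YoungDiagram.mem_cells, hν, mem_insert, YoungDiagram.mem_cells]

lemma colLen_eq_of_cells_eq_insert (hrc : (r, c) ∉ μ.cells)
    (hν : ν.cells = insert (r, c) μ.cells) : μ.colLen c = r := by
  rw [YoungDiagram.mem_cells] at hrc
  refine eq_of_forall_lt_iff fun i => ?_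
  rw [← YoungDiagram.mem_iff_lt_colLen]
  constructor
  · intro hi
    by_contra! hri
    exact hrc (μ.up_left_mem hri le_rfl hi)
  · intro hir
    have hi : (i, c) ∈ ν :=
      ν.up_left_mem hir.le le_rfl ((mem_iff_of_cells_eq_insert hν).2 (Or.inl rfl))
    rcases (mem_iff_of_cells_eq_insert hν).1 hi with h | h
    · exact absurd (Prod.ext_iff.1 h).1 hir.ne
    · exact h

lemma hook_eq_one_of_cells_eq_insert (hrc : (r, c) ∉ μ.cells)
    (hν : ν.cells = insert (r, c) μ.cells) : hook ν (r, c) = 1 := by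
  rw [YoungDiagram.mem_cells] at hrc
  have hright : (r, c + 1) ∉ ν := fun h => by
    rcases (mem_iff_of_cells_eq_insert hν).1 h with h | h
    · simp at h
    · exact hrc (μ.up_left_mem le_rfl (Nat.le_succ c) h)
  have hbelow : (r + 1, c) ∉ ν := fun h => by
    rcases (mem_iff_of_cells_eq_insert hν).1 h with h | h
    · simp at h
    · exact hrc (μ.up_left_mem (Nat.le_succ r) le_rfl h)
  rw [YoungDiagram.mem_iff_lt_rowLen] at hright
  rw [YoungDiagram.mem_iff_lt_colLen] at hbelow
  simp only [hook, arm, leg]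
  omega

lemma rowIndexSum_of_cells_eq_insert (hrc : (r, c) ∉ μ.cells)
    (hν : ν.cells = insert (r, c) μ.cells) : rowIndexSum ν = rowIndexSum μ + r := by
  rw [rowIndexSum, hν, sum_insert hrc, add_comm]
  rfl

lemma qHookProd_of_cells_eq_insert {q : ℝ} (hq1 : q ≠ 1) (hrc : (r, c) ∉ μ.cells)
    (hν : ν.cells = insert (r, c) μ.cells) :
    qHookProd q ν = ∏ s ∈ μ.cells, qint q (hook ν s) := by
  rw [qHookProd, hν, prod_insert hrc, hook_eq_one_of_cells_eq_insert hrc hν, qint_one hq1,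
    one_mul]

lemma schur_multiplicity_eq_div {q : ℝ} (hq0 : 0 < q) (hq1 : q ≠ 1) (hrc : (r, c) ∉ μ.cells)
    (hν : ν.cells = insert (r, c) μ.cells) :
    (1 / q ^ μ.colLen c) * (∏ s ∈ μ.cells, qint q (hook ν s)) /
        (∏ s ∈ μ.cells, qint q (hook μ s)) = schurWeight q ν / schurWeight q μ := by
  have hμ : qHookProd q μ ≠ 0 := qHookProd_ne_zero hq0 hq1 μ
  have hq : q ≠ 0 := hq0.ne'
  rw [← qHookProd, ← qHookProd_of_cells_eq_insert hq1 hrc hν, schurWeight, schurWeight,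
    rowIndexSum_of_cells_eq_insert hrc hν, colLen_eq_of_cells_eq_insert hrc hν, pow_add]
  field_simp

end AddCell

lemma prod_range_div_of_ne_zero {K : Type*} [Field K] (f : ℕ → K) (hf : ∀ j, f j ≠ 0)
    (m : ℕ) : ∏ j ∈ range m, f (j + 1) / f j = f m / f 0 := by
  simpa using congrArg Units.val (prod_range_div (fun j => Units.mk0 (f j) (hf j)) m)

lemma IsChainFrom.prod_eq_div {K : Type*} [Field K] {W : YoungDiagram → K}
    (hW : ∀ μ, W μ ≠ 0) {κ : YoungDiagram → YoungDiagram → K}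
    (hκ : ∀ μ ν x, x ∉ μ.cells → ν.cells = insert x μ.cells → κ μ ν = W ν / W μ)
    {m : ℕ} {μ ν : YoungDiagram} {γ : ℕ → YoungDiagram} (hγ : IsChainFrom m μ ν γ) :
    ∏ j ∈ range m, κ (γ j) (γ (j + 1)) = W ν / W μ := by
  obtain ⟨h0, hend, hstep⟩ := hγ
  calc ∏ j ∈ range m, κ (γ j) (γ (j + 1))
      = ∏ j ∈ range m, W (γ (j + 1)) / W (γ j) := prod_congr rfl fun j hj => by
        obtain ⟨x, hx, hcells⟩ := hstep j (mem_range.1 hj)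
        exact hκ _ _ x hx hcells
    _ = W (γ m) / W (γ 0) := prod_range_div_of_ne_zero (fun j => W (γ j)) (fun _ => hW _) m
    _ = W ν / W μ := by rw [h0, hend m le_rfl]

/-- For the Young lattice with Schur multiplicity
`κ(λ,Λ) = (1/q^{λ'_i}) ∏_{s∈λ}[h_Λ(s)]_q/∏_{s∈λ}[h_λ(s)]_q`, the product of
multiplicities along a saturated chain depends only on the endpoints; and with
`dim(μ,ν) = Σ_{chains μ→ν} ∏ κ` (encoded via Finsets `SΛ`, `S0` of chains from
`Λ` to `ν` and from `∅` to `ν`, whose cardinalities are the numbers of standard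
Young tableaux `f^{ν/Λ} = dim*(ν/Λ)` and `f^ν = dim*(ν)`), one has
`dim(Λ,ν)/dim(∅,ν) = (q^{n(Λ)}/∏_{s∈Λ}[h_Λ(s)]_q) · dim*(ν/Λ)/dim*(ν)`. -/
theorem schur_relative_dimension
    (q : ℝ) (hq0 : 0 < q) (hq1 : q < 1)
    (κf : YoungDiagram → YoungDiagram → ℝ)
    (hκf : ∀ (μ ν : YoungDiagram) (r c : ℕ), (r, c) ∉ μ.cells →
      ν.cells = insert (r, c) μ.cells →
      κf μ ν = (1 / q ^ μ.colLen c) *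
        (∏ s ∈ μ.cells, qint q (hook ν s)) / (∏ s ∈ μ.cells, qint q (hook μ s))) :
    (∀ (m : ℕ) (μ ν : YoungDiagram) (γ δ : ℕ → YoungDiagram),
      IsChainFrom m μ ν γ → IsChainFrom m μ ν δ →
      ∏ j ∈ Finset.range m, κf (γ j) (γ (j + 1))
        = ∏ j ∈ Finset.range m, κf (δ j) (δ (j + 1))) ∧
    (∀ (Λ ν : YoungDiagram), Λ.cells ⊆ ν.cells →
      ∀ (SΛ S0 : Finset (ℕ → YoungDiagram)),
      (∀ γ, γ ∈ SΛ ↔ IsChainFrom (ν.cells.card - Λ.cells.card) Λ ν γ) →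
      (∀ γ, γ ∈ S0 ↔ IsChainFrom ν.cells.card ⊥ ν γ) →
      (∑ γ ∈ SΛ, ∏ j ∈ Finset.range (ν.cells.card - Λ.cells.card), κf (γ j) (γ (j + 1))) /
          (∑ γ ∈ S0, ∏ j ∈ Finset.range ν.cells.card, κf (γ j) (γ (j + 1)))
        = (q ^ (∑ i ∈ Finset.range (Λ.colLen 0), i * Λ.rowLen i) /
            ∏ s ∈ Λ.cells, qint q (hook Λ s)) * ((SΛ.card : ℝ) / (S0.card : ℝ))) := by
  have hW := schurWeight_ne_zero hq0 hq1.ne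
  have hκW : ∀ μ ν x, x ∉ μ.cells → ν.cells = insert x μ.cells →
      κf μ ν = schurWeight q ν / schurWeight q μ := by
    rintro μ ν ⟨r, c⟩ hx hν
    rw [hκf μ ν r c hx hν, schur_multiplicity_eq_div hq0 hq1.ne hx hν]
  refine ⟨fun m μ ν γ δ hγ hδ => by rw [hγ.prod_eq_div hW hκW, hδ.prod_eq_div hW hκW], ?_⟩
  intro Λ ν _ SΛ S0 hSΛ hS0
  rw [sum_congr rfl fun γ hγ => ((hSΛ γ).1 hγ).prod_eq_div hW hκW,
    sum_congr rfl fun γ hγ => ((hS0 γ).1 hγ).prod_eq_div hW hκW, sum_const, sum_const,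
    nsmul_eq_mul, nsmul_eq_mul, schurWeight_bot, div_one, mul_div_mul_comm,
    div_div_cancel_left' (hW ν), schurWeight, inv_div, ← rowIndexSum_eq_sum_rowLen, mul_comm]
  rfl
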